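/- arXiv:0706.1286 — 3 statements merged into one kernel-verified Lean document; each statement's English description precedes it below -/
import Mathlib

section
/- Let F ⊣ G be an adjunction of lax monoidal functors between monoidal categories in which the unit and counit are monoidal natural transformations. Then the left adjoint F is strong monoidal: its lax structure maps F_⊗ : F M ⊗ F N ⟶ F(M ⊗ N) and F_U : 1 ⟶ F 1 are isomorphisms, with inverse of F_⊗ given by the composite F(M ⊗ N) ⟶ F(GFM ⊗ GFN) ⟶ FG(FM ⊗ FN) ⟶ FM ⊗ FN. -/
/-!
Whiskering the structure maps of `G` by the adjunction gives candidate inverses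
`F (M ⊗ N) ⟶ F (GFM ⊗ GFN) ⟶ FG (FM ⊗ FN) ⟶ FM ⊗ FN` and `F 𝟙 ⟶ FG 𝟙 ⟶ 𝟙`. Monoidality of the
counit, with the triangle identity, makes them right inverses of `μ F` and `ε F`; monoidality of
the unit, with naturality of the counit and the triangle identity, makes them left inverses.
-/

open CategoryTheory MonoidalCategory Functor.LaxMonoidal

namespace CategoryTheory.Adjunction

variable {C D : Type*} [Category C] [Category D] [MonoidalCategory C] [MonoidalCategory D]
  {F : C ⥤ D} {G : D ⥤ C} [F.LaxMonoidal] [G.LaxMonoidal] (adj : F ⊣ G)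

def leftAdjointη : F.obj (𝟙_ C) ⟶ 𝟙_ D :=
  F.map (ε G) ≫ adj.counit.app (𝟙_ D)

def leftAdjointδ (M N : C) : F.obj (M ⊗ N) ⟶ F.obj M ⊗ F.obj N :=
  F.map (adj.unit.app M ⊗ₘ adj.unit.app N) ≫ F.map (μ G (F.obj M) (F.obj N)) ≫
    adj.counit.app (F.obj M ⊗ F.obj N)

theorem ε_leftAdjointη (hcounit : NatTrans.IsMonoidal adj.counit) :
    ε F ≫ adj.leftAdjointη = 𝟙 _ := by
  simpa [leftAdjointη] using hcounit.unit

theorem leftAdjointη_ε (hunit : NatTrans.IsMonoidal adj.unit) :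
    adj.leftAdjointη ≫ ε F = 𝟙 _ := by
  have hunit_ε : ε G ≫ G.map (ε F) = adj.unit.app (𝟙_ C) := by
    simpa using hunit.unit.symm
  rw [leftAdjointη, Category.assoc, ← adj.counit_naturality, ← F.map_comp_assoc, hunit_ε]
  exact adj.left_triangle_components (𝟙_ C)

theorem μ_leftAdjointδ (hcounit : NatTrans.IsMonoidal adj.counit) (M N : C) :
    μ F M N ≫ adj.leftAdjointδ M N = 𝟙 _ := by
  have hcounit_μ := hcounit.tensor (F.obj M) (F.obj N)
  simp only [comp_μ, id_μ, Category.comp_id, Category.assoc] at hcounit_μ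
  rw [leftAdjointδ, ← μ_natural_assoc]
  simp only [Functor.comp_obj]
  rw [hcounit_μ, tensorHom_comp_tensorHom,
    adj.left_triangle_components, adj.left_triangle_components, id_tensorHom_id]

theorem leftAdjointδ_μ (hunit : NatTrans.IsMonoidal adj.unit) (M N : C) :
    adj.leftAdjointδ M N ≫ μ F M N = 𝟙 _ := by
  have hunit_μ := hunit.tensor M N
  simp only [comp_μ, id_μ, Category.id_comp] at hunit_μ
  rw [leftAdjointδ, Category.assoc, Category.assoc, ← adj.counit_naturality,
    ← F.map_comp_assoc, ← F.map_comp_assoc, Category.assoc, ← hunit_μ]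
  exact adj.left_triangle_components (M ⊗ N)

end CategoryTheory.Adjunction

/-- Doctrinal adjunction: if `F ⊣ G` is an adjunction of lax monoidal functors whose unit and
counit are monoidal natural transformations, then the left adjoint `F` is strong monoidal: its
structure maps `ε : 𝟙_D ⟶ F(𝟙_C)` and `μ : F M ⊗ F N ⟶ F (M ⊗ N)` are isomorphisms, the inverse
of `μ` being the composite `F(M ⊗ N) ⟶ F(GFM ⊗ GFN) ⟶ FG(FM ⊗ FN) ⟶ FM ⊗ FN`. -/
theorem stmt_10 {C D : Type*} [Category C] [Category D]
    [MonoidalCategory C] [MonoidalCategory D]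
    (F : C ⥤ D) (G : D ⥤ C) [F.LaxMonoidal] [G.LaxMonoidal]
    (adj : F ⊣ G)
    (hunit : NatTrans.IsMonoidal adj.unit) (hcounit : NatTrans.IsMonoidal adj.counit) :
    IsIso (ε F) ∧
      ∀ M N : C,
        μ F M N ≫
            (F.map (adj.unit.app M ⊗ₘ adj.unit.app N) ≫ F.map (μ G (F.obj M) (F.obj N)) ≫
              adj.counit.app (F.obj M ⊗ F.obj N)) = 𝟙 _ ∧
          (F.map (adj.unit.app M ⊗ₘ adj.unit.app N) ≫ F.map (μ G (F.obj M) (F.obj N)) ≫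
              adj.counit.app (F.obj M ⊗ F.obj N)) ≫ μ F M N = 𝟙 _ :=
  ⟨⟨adj.leftAdjointη, adj.ε_leftAdjointη hcounit, adj.leftAdjointη_ε hunit⟩,
    fun M N => ⟨adj.μ_leftAdjointδ hcounit M N, adj.leftAdjointδ_μ hunit M N⟩⟩
end

section
/- If F : 𝒞 → 𝒟 is a strong monoidal functor between monoidal categories with coequalizers preserved by tensor, and F preserves coequalizers, then for any monoid B in 𝒞 and bimodules M, N the canonical map FM ⊗_{FB} FN ⟶ F(M ⊗_B N) is an isomorphism. -/
/-!
The tensorator `μ` identifies the parallel pair defining `FM ⊗_{FB} FN` with the image under `F`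
of the pair defining `M ⊗_B N`; so `t` is the induced isomorphism of coequalizers followed by the
comparison map of `F`, which is invertible because `F` preserves coequalizers.
-/

open CategoryTheory MonoidalCategory Limits Functor.LaxMonoidal

namespace CategoryTheory

variable {C D : Type*} [Category C] [Category D]

theorem Limits.isIso_of_π_comp_eq_map_π (F : C ⥤ D) {X Y : D} {X' Y' : C}
    {f g : X ⟶ Y} {f' g' : X' ⟶ Y'} [HasCoequalizer f g] [HasCoequalizer f' g']
    [HasCoequalizer (F.map f') (F.map g')] [PreservesColimit (parallelPair f' g') F]
    (e₀ : X ≅ F.obj X') (e₁ : Y ≅ F.obj Y')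
    (hf : f ≫ e₁.hom = e₀.hom ≫ F.map f') (hg : g ≫ e₁.hom = e₀.hom ≫ F.map g')
    (t : coequalizer f g ⟶ F.obj (coequalizer f' g'))
    (ht : coequalizer.π f g ≫ t = e₁.hom ≫ F.map (coequalizer.π f' g')) : IsIso t := by
  have ht' : t = (HasColimit.isoOfNatIso (parallelPair.ext e₀ e₁ hf hg)).hom ≫
      coequalizerComparison f' g' F := by
    refine coequalizer.hom_ext ?_
    rw [ht, ← Category.assoc, HasColimit.isoOfNatIso_ι_hom, Category.assoc,
      ι_comp_coequalizerComparison]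
    rfl
  rw [ht']
  infer_instance

namespace Functor.LaxMonoidal

variable [MonoidalCategory C] [MonoidalCategory D] (F : C ⥤ D) [F.LaxMonoidal]

theorem μ_comp_map_whiskerRight_comp_μ {X Y W : C} (a : X ⊗ Y ⟶ W) (Z : C) :
    (μ F X Y ≫ F.map a) ▷ F.obj Z ≫ μ F W Z =
      (μ F X Y ▷ F.obj Z ≫ μ F (X ⊗ Y) Z) ≫ F.map (a ▷ Z) := by
  simp only [comp_whiskerRight, Category.assoc, μ_natural_left]

theorem associator_whiskerLeft_μ_comp_map_comp_μ {X Y Z W : C} (b : Y ⊗ Z ⟶ W) :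
    ((α_ (F.obj X) (F.obj Y) (F.obj Z)).hom ≫ F.obj X ◁ (μ F Y Z ≫ F.map b)) ≫ μ F X W =
      (μ F X Y ▷ F.obj Z ≫ μ F (X ⊗ Y) Z) ≫ F.map ((α_ X Y Z).hom ≫ X ◁ b) := by
  simp only [MonoidalCategory.whiskerLeft_comp, Category.assoc, μ_natural_right, F.map_comp]
  rw [← associativity_assoc]

end Functor.LaxMonoidal

end CategoryTheory

/-- If `F : C ⥤ D` is a strong monoidal functor between monoidal categories with coequalizers
preserved by tensoring, and `F` preserves coequalizers, then for any monoid `B` in `C` and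
`B`-bimodules `M`, `N` the canonical map `FM ⊗_{FB} FN ⟶ F(M ⊗_B N)` is an isomorphism. -/
theorem stmt_12 {C D : Type*} [Category C] [Category D]
    [MonoidalCategory C] [MonoidalCategory D]
    [HasCoequalizers C] [HasCoequalizers D]
    [∀ X : C, PreservesColimitsOfSize.{0, 0} (tensorLeft X)]
    [∀ X : C, PreservesColimitsOfSize.{0, 0} (tensorRight X)]
    [∀ X : D, PreservesColimitsOfSize.{0, 0} (tensorLeft X)]
    [∀ X : D, PreservesColimitsOfSize.{0, 0} (tensorRight X)]
    (F : C ⥤ D) [F.Monoidal]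
    [PreservesColimitsOfShape WalkingParallelPair F]
    (B : Mon C) (M N : Bimod B B)
    (t : coequalizer
            ((μ F M.X B.X ≫ F.map M.actRight) ▷ F.obj N.X)
            ((α_ (F.obj M.X) (F.obj B.X) (F.obj N.X)).hom ≫
              (F.obj M.X ◁ (μ F B.X N.X ≫ F.map N.actLeft))) ⟶
          F.obj (coequalizer (M.actRight ▷ N.X) ((α_ M.X B.X N.X).hom ≫ (M.X ◁ N.actLeft))))
    (ht : coequalizer.π _ _ ≫ t = μ F M.X N.X ≫ F.map (coequalizer.π _ _)) :
    IsIso t :=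
  isIso_of_π_comp_eq_map_π F
    (whiskerRightIso (Functor.Monoidal.μIso F M.X B.X) (F.obj N.X) ≪≫
      Functor.Monoidal.μIso F (M.X ⊗ B.X) N.X)
    (Functor.Monoidal.μIso F M.X N.X)
    (μ_comp_map_whiskerRight_comp_μ F M.actRight N.X)
    (associator_whiskerLeft_μ_comp_map_comp_μ F N.actLeft) t ht
end

section
/- Let Φ : 𝒜 → ℬ be a bifibration (fibration and opfibration) with a chosen cleavage. Given a commuting square in ℬ with top h : A → B, left k : A → C, right g : B → D and bottom f : C → D, so that f k = g h, the square satisfies the Beck–Chevalley condition (the canonical transformation k_! h* ⟶ f* g_! is an isomorphism) if and only if for every object M over B there is a commutative square in 𝒜 over the given square whose top and bottom arrows are cartesian and whose left and right arrows are opcartesian. -/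
open CategoryTheory Functor

/-- Beck–Chevalley via (op)cartesian squares.  Let `p : 𝒳 ⥤ 𝒮` be a bifibration and consider a
commuting square in `𝒮` with top `h : A ⟶ B`, left `k : A ⟶ C`, right `g : B ⟶ D` and bottom
`f : C ⟶ D` (so `k ≫ f = h ≫ g`).  The square satisfies the Beck–Chevalley condition – i.e. the
canonical transformation `k_! h^* ⟶ f^* g_!` is an isomorphism, expressed componentwise as: for
every object `M` over `B` and every choice of a cartesian lift `φ` of `h` at `M`, opcartesian
lifts `χ` of `k` and `ξ` of `g`, and a cartesian lift `ψ` of `f`, the induced vertical comparison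
map `δ` (the unique map over `𝟙 C` with `χ ≫ δ ≫ ψ = φ ≫ ξ`) is invertible – if and only if for
every `M` over `B` the square lifts to a commutative square in `𝒳` whose top and bottom arrows
are cartesian and whose left and right arrows are opcartesian. -/
theorem stmt_16 {𝒮 𝒳 : Type*} [Category 𝒮] [Category 𝒳] (p : 𝒳 ⥤ 𝒮)
    [p.IsFibered]
    (hop : ∀ {R S : 𝒮} (f : R ⟶ S) (a : 𝒳), p.obj a = R →
      ∃ (b : 𝒳) (φ : a ⟶ b), p.IsStronglyCocartesian f φ)
    {A B C D : 𝒮} (h : A ⟶ B) (k : A ⟶ C) (g : B ⟶ D) (f : C ⟶ D)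
    (hsq : k ≫ f = h ≫ g) :
    (∀ (M : 𝒳), p.obj M = B →
      ∀ {hM : 𝒳} (φ : hM ⟶ M), p.IsStronglyCartesian h φ →
      ∀ {khM : 𝒳} (χ : hM ⟶ khM), p.IsStronglyCocartesian k χ →
      ∀ {gM : 𝒳} (ξ : M ⟶ gM), p.IsStronglyCocartesian g ξ →
      ∀ {fgM : 𝒳} (ψ : fgM ⟶ gM), p.IsStronglyCartesian f ψ →
        ∃ δ : khM ⟶ fgM, p.IsHomLift (𝟙 C) δ ∧ χ ≫ δ ≫ ψ = φ ≫ ξ ∧ IsIso δ)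
    ↔
    (∀ (M : 𝒳), p.obj M = B →
      ∃ (M' M'' M''' : 𝒳) (φ : M' ⟶ M) (χ : M' ⟶ M''') (ξ : M ⟶ M'') (ψ : M''' ⟶ M''),
        p.IsStronglyCartesian h φ ∧ p.IsStronglyCocartesian k χ ∧
        p.IsStronglyCocartesian g ξ ∧ p.IsStronglyCartesian f ψ ∧
        χ ≫ ψ = φ ≫ ξ) := by
  constructor
  · -- Forward: Beck–Chevalley iso gives a lifted commuting square.
    intro H M hM
    obtain ⟨hMobj, φ, hφc⟩ := IsPreFibered.exists_isCartesian p hM h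
    haveI := hφc
    have hφ : p.IsStronglyCartesian h φ := inferInstance
    have hA : p.obj hMobj = A := IsHomLift.domain_eq p h φ
    obtain ⟨khM, χ, hχ⟩ := hop k hMobj hA
    obtain ⟨gM, ξ, hξ⟩ := hop g M hM
    haveI := hξ
    have hD : p.obj gM = D := IsHomLift.codomain_eq p g ξ
    obtain ⟨fgM, ψ, hψc⟩ := IsPreFibered.exists_isCartesian p hD f
    haveI := hψc
    have hψ : p.IsStronglyCartesian f ψ := inferInstance
    obtain ⟨δ, hδl, hδeq, hδiso⟩ := H M hM φ hφ χ hχ ξ hξ ψ hψ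
    haveI := hδl; haveI := hδiso; haveI := hχ
    haveI : p.IsStronglyCocartesian (𝟙 C) δ := inferInstance
    refine ⟨hMobj, gM, fgM, φ, χ ≫ δ, ξ, ψ, hφ, ?_, hξ, hψ, by rw [Category.assoc, hδeq]⟩
    have : p.IsStronglyCocartesian (k ≫ 𝟙 C) (χ ≫ δ) := inferInstance
    rwa [Category.comp_id] at this
  · -- Backward: a lifted commuting square gives invertibility of the comparison map.
    intro H M hM hM' φ hφ khM χ hχ gM ξ hξ fgM ψ hψ
    obtain ⟨M', M'', M''', φ₀, χ₀, ξ₀, ψ₀, hφ₀, hχ₀, hξ₀, hψ₀, hsq₀⟩ := H M hM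
    haveI := hφ; haveI := hχ; haveI := hξ; haveI := hψ
    haveI := hφ₀; haveI := hχ₀; haveI := hξ₀; haveI := hψ₀
    -- `u : hM' ≅ M'` over `𝟙 A`, with `u.hom ≫ φ₀ = φ`.
    let u : hM' ≅ M' := IsCartesian.domainUniqueUpToIso p h φ₀ φ
    have hu : u.hom ≫ φ₀ = φ := IsCartesian.fac p h φ₀ φ
    haveI : p.IsHomLift (𝟙 A) u.hom := IsCartesian.map_isHomLift p h φ₀ φ
    -- `t : gM ≅ M''` over `𝟙 D`, with `ξ ≫ t.hom = ξ₀`.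
    let t : gM ≅ M'' := IsCocartesian.codomainUniqueUpToIso p g ξ ξ₀
    have ht : ξ ≫ t.hom = ξ₀ := IsCocartesian.fac p g ξ ξ₀
    haveI : p.IsHomLift (𝟙 D) t.hom := IsCocartesian.map_isHomLift p g ξ ξ₀
    -- `u.hom ≫ χ₀` is strongly cocartesian over `k`.
    haveI : p.IsStronglyCocartesian (𝟙 A) u.hom := inferInstance
    haveI huχ : p.IsStronglyCocartesian k (u.hom ≫ χ₀) := by
      have : p.IsStronglyCocartesian (𝟙 A ≫ k) (u.hom ≫ χ₀) := inferInstance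
      rwa [Category.id_comp] at this
    -- `v : khM ≅ M'''` over `𝟙 C`, with `χ ≫ v.hom = u.hom ≫ χ₀`.
    let v : khM ≅ M''' := IsCocartesian.codomainUniqueUpToIso p k χ (u.hom ≫ χ₀)
    have hv : χ ≫ v.hom = u.hom ≫ χ₀ := IsCocartesian.fac p k χ (u.hom ≫ χ₀)
    haveI : p.IsHomLift (𝟙 C) v.hom := IsCocartesian.map_isHomLift p k χ (u.hom ≫ χ₀)
    -- `ψ ≫ t.hom` is strongly cartesian over `f`.
    haveI : p.IsStronglyCartesian (𝟙 D) t.hom := inferInstance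
    haveI hψt : p.IsStronglyCartesian f (ψ ≫ t.hom) := by
      have : p.IsStronglyCartesian (f ≫ 𝟙 D) (ψ ≫ t.hom) := inferInstance
      rwa [Category.comp_id] at this
    -- `w : M''' ≅ fgM` over `𝟙 C`, with `w.hom ≫ ψ ≫ t.hom = ψ₀`.
    let w : M''' ≅ fgM := IsCartesian.domainUniqueUpToIso p f (ψ ≫ t.hom) ψ₀
    have hw : w.hom ≫ ψ ≫ t.hom = ψ₀ := IsCartesian.fac p f (ψ ≫ t.hom) ψ₀
    haveI : p.IsHomLift (𝟙 C) w.hom := IsCartesian.map_isHomLift p f (ψ ≫ t.hom) ψ₀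
    refine ⟨v.hom ≫ w.hom, ?_, ?_, inferInstance⟩
    · have : p.IsHomLift (𝟙 C ≫ 𝟙 C) (v.hom ≫ w.hom) := IsHomLift.comp p _ _ _ _
      rwa [Category.comp_id] at this
    · calc χ ≫ (v.hom ≫ w.hom) ≫ ψ
          = (χ ≫ v.hom) ≫ (w.hom ≫ ψ ≫ t.hom) ≫ t.inv := by simp
        _ = (u.hom ≫ χ₀) ≫ ψ₀ ≫ t.inv := by rw [hv, hw]
        _ = u.hom ≫ (χ₀ ≫ ψ₀) ≫ t.inv := by simp
        _ = u.hom ≫ (φ₀ ≫ ξ₀) ≫ t.inv := by rw [hsq₀]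
        _ = (u.hom ≫ φ₀) ≫ ξ₀ ≫ t.inv := by simp
        _ = φ ≫ (ξ ≫ t.hom) ≫ t.inv := by rw [hu, ht]
        _ = φ ≫ ξ := by simp
end
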